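/- arXiv:2506.17559 — 4 statements merged into one kernel-verified Lean document; each statement's English description precedes it below -/
import Mathlib

section
/- Let η, L_B > 0 be real numbers, let α, β be real numbers, let N_B, N_G, K be positive natural numbers, and let L_{G,1}, …, L_{G,K} > 0 be real numbers. Let R be a nonnegative square-integrable real random variable with E[R²] = N_B, and let φ_1, …, φ_K be real random variables, each uniformly distributed on [0, 2π], such that R, φ_1, …, φ_K are mutually independent. Define the complex random variable h_S = √(η·N_B/((N_B+K)·L_B^α))·R + √(η·N_G/(N_B+K))·Σ_{k=1}^{K} √(1/L_{G,k}^β)·exp(−i·φ_k). Then E[|h_S|²] = η·N_B²/(L_B^α·(N_B+K)) + (η·N_G/(N_B+K))·Σ_{k=1}^{K} 1/L_{G,k}^β. -/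
open MeasureTheory ProbabilityTheory

/-- A real random variable is uniformly distributed on `[0, 2π]` if its law is
the normalized Lebesgue measure on `[0, 2π]`. -/
def IsUniform02pi {Ω : Type*} [MeasurableSpace Ω] (μ : Measure Ω) (φ : Ω → ℝ) : Prop :=
  Measure.map φ μ =
    (ENNReal.ofReal (2 * Real.pi))⁻¹ • volume.restrict (Set.Icc 0 (2 * Real.pi))

lemma unif_integral' {Ω : Type*} [MeasurableSpace Ω] {μ : Measure Ω}
    {φ : Ω → ℝ} (hm : Measurable φ) (hu : IsUniform02pi μ φ) {f : ℝ → ℝ}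
    (hf : Measurable f) :
    ∫ ω, f (φ ω) ∂μ = (2 * Real.pi)⁻¹ * ∫ x in (0:ℝ)..(2 * Real.pi), f x := by
  have h2π : (0:ℝ) < 2 * Real.pi := by positivity
  rw [← integral_map hm.aemeasurable hf.aestronglyMeasurable, hu, integral_smul_measure,
    intervalIntegral.integral_of_le h2π.le, ← integral_Icc_eq_integral_Ioc,
    ENNReal.toReal_inv, ENNReal.toReal_ofReal h2π.le, smul_eq_mul]

lemma unif_integral_cos' {Ω : Type*} [MeasurableSpace Ω] {μ : Measure Ω}
    {φ : Ω → ℝ} (hm : Measurable φ) (hu : IsUniform02pi μ φ) :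
    ∫ ω, Real.cos (φ ω) ∂μ = 0 := by
  rw [unif_integral' hm hu Real.measurable_cos, integral_cos]
  simp [Real.sin_two_pi]

lemma unif_integral_sin' {Ω : Type*} [MeasurableSpace Ω] {μ : Measure Ω}
    {φ : Ω → ℝ} (hm : Measurable φ) (hu : IsUniform02pi μ φ) :
    ∫ ω, Real.sin (φ ω) ∂μ = 0 := by
  rw [unif_integral' hm hu Real.measurable_sin, integral_sin]
  simp [Real.cos_two_pi]

lemma exp_neg_I' (θ : ℝ) :
    Complex.exp (-Complex.I * θ) =
      (Real.cos θ : ℂ) - (Real.sin θ : ℂ) * Complex.I := by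
  rw [show -Complex.I * (θ:ℂ) = ((-θ : ℝ) : ℂ) * Complex.I by push_cast; ring,
    Complex.exp_mul_I, ← Complex.ofReal_cos, ← Complex.ofReal_sin,
    Real.cos_neg, Real.sin_neg]
  push_cast
  ring

lemma abs_decomp' {K : ℕ} (a c r : ℝ) (b θ : Fin K → ℝ) :
    ‖((↑(a * r) : ℂ) +
        (c : ℂ) * ∑ k, (b k : ℂ) * Complex.exp (-Complex.I * (θ k)))‖ ^ 2 =
      a ^ 2 * r ^ 2 +
        (∑ k, (2 * a * c * b k) * (r * Real.cos (θ k))) +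
        ∑ j, ∑ k, (c ^ 2 * b j * b k) *
          (Real.cos (θ j) * Real.cos (θ k) + Real.sin (θ j) * Real.sin (θ k)) := by
  have hz : ((↑(a * r) : ℂ) +
      (c : ℂ) * ∑ k, (b k : ℂ) * Complex.exp (-Complex.I * (θ k))) =
      (↑(a * r + c * ∑ k, b k * Real.cos (θ k)) : ℂ) +
      (↑(-(c * ∑ k, b k * Real.sin (θ k))) : ℂ) * Complex.I := by
    simp only [exp_neg_I']
    push_cast
    rw [neg_mul, ← sub_eq_add_neg, add_sub_assoc]
    congr 1
    rw [Finset.mul_sum, Finset.mul_sum, Finset.mul_sum, Finset.sum_mul,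
      ← Finset.sum_sub_distrib]
    exact Finset.sum_congr rfl fun k _ => by ring
  rw [hz, Complex.sq_norm, Complex.normSq_add_mul_I]
  set C := ∑ k, b k * Real.cos (θ k) with hC
  set S := ∑ k, b k * Real.sin (θ k) with hSdef
  have e1 : 2 * (a * r) * (c * C) = ∑ k, (2 * a * c * b k) * (r * Real.cos (θ k)) := by
    rw [hC, Finset.mul_sum, Finset.mul_sum]
    exact Finset.sum_congr rfl fun k _ => by ring
  have e2 : (C * C) * c ^ 2 + (S * S) * c ^ 2 =
      ∑ j, ∑ k, (c ^ 2 * b j * b k) *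
        (Real.cos (θ j) * Real.cos (θ k) + Real.sin (θ j) * Real.sin (θ k)) := by
    rw [hC, hSdef, Finset.sum_mul_sum, Finset.sum_mul_sum, Finset.sum_mul, Finset.sum_mul,
      ← Finset.sum_add_distrib]
    refine Finset.sum_congr rfl fun j _ => ?_
    rw [Finset.sum_mul, Finset.sum_mul, ← Finset.sum_add_distrib]
    exact Finset.sum_congr rfl fun k _ => by ring
  linear_combination e1 + e2

/-- Proposition 1: average channel gain of the standalone deployment (SD)
scheme.  `R` models the norm of the normalized BS–UE channel (`E[R²] = N_B`),
and `φ k` the phase delay of waveguide `k`, uniform on `[0, 2π]`, with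
`R, φ_1, …, φ_K` mutually independent. -/
theorem sd_average_channel_gain
    {Ω : Type*} [MeasurableSpace Ω] (μ : Measure Ω) [IsProbabilityMeasure μ]
    (η LB : ℝ) (hη : 0 < η) (hLB : 0 < LB) (α β : ℝ)
    (NB NG K : ℕ) (hNB : 0 < NB) (hNG : 0 < NG) (hK : 0 < K)
    (LG : Fin K → ℝ) (hLG : ∀ k, 0 < LG k)
    (R : Ω → ℝ) (hRmeas : Measurable R) (hRnn : ∀ ω, 0 ≤ R ω)
    (hRL2 : MemLp R 2 μ) (hER2 : ∫ ω, R ω ^ 2 ∂μ = NB)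
    (φ : Fin K → Ω → ℝ) (hφmeas : ∀ k, Measurable (φ k))
    (hφunif : ∀ k, IsUniform02pi μ (φ k))
    (X : Option (Fin K) → Ω → ℝ)
    (hXnone : X none = R) (hXsome : ∀ k, X (some k) = φ k)
    (hindep : iIndepFun X μ)
    (hS : Ω → ℂ)
    (hhS : ∀ ω, hS ω =
      (Real.sqrt (η * NB / ((NB + K) * LB ^ α)) * R ω : ℝ) +
      (Real.sqrt (η * NG / (NB + K)) : ℂ) *
        ∑ k, (Real.sqrt (1 / LG k ^ β) : ℂ) * Complex.exp (-Complex.I * (φ k ω))) :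
    ∫ ω, ‖hS ω‖ ^ 2 ∂μ =
      η * NB ^ 2 / (LB ^ α * (NB + K)) +
        η * NG / (NB + K) * ∑ k, 1 / LG k ^ β := by
  set a := Real.sqrt (η * NB / ((NB + K) * LB ^ α)) with ha
  set c := Real.sqrt (η * NG / (NB + K)) with hc
  set b : Fin K → ℝ := fun k => Real.sqrt (1 / LG k ^ β) with hb
  -- pointwise identity
  have hpt : ∀ ω, ‖hS ω‖ ^ 2 =
      a ^ 2 * R ω ^ 2 +
        (∑ k, (2 * a * c * b k) * (R ω * Real.cos (φ k ω))) +
        ∑ j, ∑ k, (c ^ 2 * b j * b k) *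
          (Real.cos (φ j ω) * Real.cos (φ k ω) +
            Real.sin (φ j ω) * Real.sin (φ k ω)) := by
    intro ω
    rw [hhS ω]
    exact abs_decomp' a c (R ω) b (fun k => φ k ω)
  -- integrability facts
  have hRint : Integrable R μ := hRL2.integrable one_le_two
  have hR2int : Integrable (fun ω => R ω ^ 2) μ := hRL2.integrable_sq
  have icos : ∀ k, Integrable (fun ω => Real.cos (φ k ω)) μ := fun k =>
    (integrable_const (1:ℝ)).mono'
      ((Real.measurable_cos.comp (hφmeas k)).aestronglyMeasurable)
      (Filter.Eventually.of_forall fun ω => by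
        simpa using Real.abs_cos_le_one (φ k ω))
  have isin : ∀ k, Integrable (fun ω => Real.sin (φ k ω)) μ := fun k =>
    (integrable_const (1:ℝ)).mono'
      ((Real.measurable_sin.comp (hφmeas k)).aestronglyMeasurable)
      (Filter.Eventually.of_forall fun ω => by
        simpa using Real.abs_sin_le_one (φ k ω))
  have iRcos : ∀ k, Integrable (fun ω => R ω * Real.cos (φ k ω)) μ := fun k => by
    have := hRint.bdd_mul (c := 1)
      ((Real.measurable_cos.comp (hφmeas k)).aestronglyMeasurable)
      (Filter.Eventually.of_forall fun ω => by simpa using Real.abs_cos_le_one (φ k ω))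
    simpa [mul_comm] using this
  have icc : ∀ j k, Integrable (fun ω => Real.cos (φ j ω) * Real.cos (φ k ω)) μ :=
    fun j k =>
    (icos k).bdd_mul (c := 1) ((Real.measurable_cos.comp (hφmeas j)).aestronglyMeasurable)
      (Filter.Eventually.of_forall fun ω => by simpa using Real.abs_cos_le_one (φ j ω))
  have iss : ∀ j k, Integrable (fun ω => Real.sin (φ j ω) * Real.sin (φ k ω)) μ :=
    fun j k =>
    (isin k).bdd_mul (c := 1) ((Real.measurable_sin.comp (hφmeas j)).aestronglyMeasurable)
      (Filter.Eventually.of_forall fun ω => by simpa using Real.abs_sin_le_one (φ j ω))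
  -- independence-based zero integrals
  have hRcos0 : ∀ k, ∫ ω, R ω * Real.cos (φ k ω) ∂μ = 0 := by
    intro k
    have hRφ : IndepFun R (φ k) μ := by
      have h := hindep.indepFun (show (none : Option (Fin K)) ≠ some k by simp)
      rwa [hXnone, hXsome] at h
    have h2 : IndepFun R (fun ω => Real.cos (φ k ω)) μ :=
      hRφ.comp measurable_id Real.measurable_cos
    have := h2.integral_fun_mul_eq_mul_integral hRint.aestronglyMeasurable (icos k).aestronglyMeasurable
    simpa [unif_integral_cos' (hφmeas k) (hφunif k)] using this
  have hcc0 : ∀ j k, j ≠ k → ∫ ω, Real.cos (φ j ω) * Real.cos (φ k ω) ∂μ = 0 := by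
    intro j k hjk
    have hφφ : IndepFun (φ j) (φ k) μ := by
      have h := hindep.indepFun (show (some j : Option (Fin K)) ≠ some k by simp [hjk])
      rwa [hXsome, hXsome] at h
    have h2 : IndepFun (fun ω => Real.cos (φ j ω)) (fun ω => Real.cos (φ k ω)) μ :=
      hφφ.comp Real.measurable_cos Real.measurable_cos
    have := h2.integral_fun_mul_eq_mul_integral (icos j).aestronglyMeasurable (icos k).aestronglyMeasurable
    simpa [unif_integral_cos' (hφmeas k) (hφunif k)] using this
  have hss0 : ∀ j k, j ≠ k → ∫ ω, Real.sin (φ j ω) * Real.sin (φ k ω) ∂μ = 0 := by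
    intro j k hjk
    have hφφ : IndepFun (φ j) (φ k) μ := by
      have h := hindep.indepFun (show (some j : Option (Fin K)) ≠ some k by simp [hjk])
      rwa [hXsome, hXsome] at h
    have h2 : IndepFun (fun ω => Real.sin (φ j ω)) (fun ω => Real.sin (φ k ω)) μ :=
      hφφ.comp Real.measurable_sin Real.measurable_sin
    have := h2.integral_fun_mul_eq_mul_integral (isin j).aestronglyMeasurable (isin k).aestronglyMeasurable
    simpa [unif_integral_sin' (hφmeas k) (hφunif k)] using this
  have hf2 : ∀ j k, ∫ ω, (Real.cos (φ j ω) * Real.cos (φ k ω) +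
      Real.sin (φ j ω) * Real.sin (φ k ω)) ∂μ = if j = k then 1 else 0 := by
    intro j k
    by_cases hjk : j = k
    · subst hjk
      simp only [if_pos rfl]
      have : ∀ ω, Real.cos (φ j ω) * Real.cos (φ j ω) +
          Real.sin (φ j ω) * Real.sin (φ j ω) = 1 := fun ω => by
        have := Real.sin_sq_add_cos_sq (φ j ω)
        nlinarith [this]
      simp only [this]
      simp
    · rw [if_neg hjk, integral_add (icc j k) (iss j k), hcc0 j k hjk, hss0 j k hjk]
      ring
  -- main computation
  simp only [hpt]
  have Ig0 : Integrable (fun ω => a ^ 2 * R ω ^ 2) μ := hR2int.const_mul _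
  have Ig1 : Integrable
      (fun ω => ∑ k, (2 * a * c * b k) * (R ω * Real.cos (φ k ω))) μ :=
    integrable_finset_sum _ fun k _ => (iRcos k).const_mul _
  have Ig2in : ∀ j k : Fin K, Integrable (fun ω => (c ^ 2 * b j * b k) *
      (Real.cos (φ j ω) * Real.cos (φ k ω) +
        Real.sin (φ j ω) * Real.sin (φ k ω))) μ := fun j k => by
    exact ((icc j k).add (iss j k)).const_mul _
  have Ig2 : Integrable (fun ω => ∑ j, ∑ k, (c ^ 2 * b j * b k) *
      (Real.cos (φ j ω) * Real.cos (φ k ω) +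
        Real.sin (φ j ω) * Real.sin (φ k ω))) μ :=
    integrable_finset_sum _ fun j _ => integrable_finset_sum _ fun k _ => Ig2in j k
  have Ig01 : Integrable (fun ω => a ^ 2 * R ω ^ 2 +
      ∑ k, (2 * a * c * b k) * (R ω * Real.cos (φ k ω))) μ := by
    exact Ig0.add Ig1
  rw [integral_add Ig01 Ig2, integral_add Ig0 Ig1,
    integral_const_mul _ _, hER2,
    integral_finset_sum _ (fun k _ => (iRcos k).const_mul _),
    integral_finset_sum _ (fun j _ => integrable_finset_sum _ fun k _ => Ig2in j k)]
  simp only [integral_finset_sum _ (fun k (_ : k ∈ Finset.univ) => Ig2in _ k)]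
  have hmid : ∑ k, ∫ ω, (2 * a * c * b k) * (R ω * Real.cos (φ k ω)) ∂μ = 0 := by
    refine Finset.sum_eq_zero fun k _ => ?_
    rw [integral_const_mul _ _, hRcos0 k, mul_zero]
  have hlast : ∑ j, ∑ k, ∫ ω, (c ^ 2 * b j * b k) *
      (Real.cos (φ j ω) * Real.cos (φ k ω) + Real.sin (φ j ω) * Real.sin (φ k ω)) ∂μ
      = ∑ j, c ^ 2 * b j ^ 2 := by
    refine Finset.sum_congr rfl fun j _ => ?_
    have : ∀ k : Fin K, ∫ ω, (c ^ 2 * b j * b k) *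
        (Real.cos (φ j ω) * Real.cos (φ k ω) + Real.sin (φ j ω) * Real.sin (φ k ω)) ∂μ
        = if j = k then c ^ 2 * b j * b k else 0 := fun k => by
      rw [integral_const_mul, hf2 j k]
      split <;> simp
    simp only [this]
    simp [sq, mul_assoc]
  rw [hmid, hlast]
  -- arithmetic
  have hLBα : (0:ℝ) < LB ^ α := Real.rpow_pos_of_pos hLB α
  have hNBK : (0:ℝ) < (NB:ℝ) + K := by positivity
  have ha2 : a ^ 2 = η * NB / ((NB + K) * LB ^ α) := by
    rw [ha, Real.sq_sqrt]
    positivity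
  have hc2 : c ^ 2 = η * NG / (NB + K) := by
    rw [hc, Real.sq_sqrt]
    positivity
  have hb2 : ∀ k, b k ^ 2 = 1 / LG k ^ β := fun k => by
    rw [hb, Real.sq_sqrt]
    have : (0:ℝ) < LG k ^ β := Real.rpow_pos_of_pos (hLG k) β
    positivity
  rw [ha2, hc2]
  simp only [hb2]
  rw [Finset.mul_sum, add_zero]
  congr 1
  field_simp
end

section
/- Let η, L_B > 0 be real numbers, let α, β be real numbers, let N_B, N_G, K be positive natural numbers, and let L_{G,1}, …, L_{G,K} > 0 be real numbers. Let R be a nonnegative square-integrable real random variable with E[R²] = N_B, and let φ_1 be a real random variable uniformly distributed on [0, 2π] and independent of R. Define the complex random variable h_C = √(η·N_B/((N_B+K)·L_B^α))·R + √((η·K/(N_B+K))·Σ_{k=1}^{K} N_G/L_{G,k}^β)·exp(−i·φ_1). Then E[|h_C|²] = η·N_B²/((N_B+K)·L_B^α) + (η·N_G·K/(N_B+K))·Σ_{k=1}^{K} 1/L_{G,k}^β. -/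
open MeasureTheory ProbabilityTheory

lemma pointwise_abs_sq (a b x r : ℝ) :
    ‖(a * r : ℝ) + (b : ℂ) * Complex.exp (-Complex.I * (x : ℝ))‖ ^ 2 =
      a^2 * r^2 + (2*a*b) * (r * Real.cos x) + b^2 := by
  rw [Complex.sq_norm]
  have h1 : (-Complex.I * (x : ℝ)) = ((-x : ℝ) : ℂ) * Complex.I := by push_cast; ring
  rw [h1, Complex.exp_mul_I]
  simp [Complex.normSq_apply, ← Complex.ofReal_cos, ← Complex.ofReal_sin]
  have := Real.sin_sq_add_cos_sq x
  nlinarith [this]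

lemma integral_cos_uniform {Ω : Type*} [MeasurableSpace Ω] (μ : Measure Ω)
    [IsProbabilityMeasure μ] (φ : Ω → ℝ) (hφ : Measurable φ)
    (h : IsUniform02pi μ φ) : ∫ ω, Real.cos (φ ω) ∂μ = 0 := by
  rw [← integral_map hφ.aemeasurable Real.measurable_cos.aestronglyMeasurable, h]
  rw [integral_smul_measure]
  have h2 : (0:ℝ) ≤ 2 * Real.pi := by positivity
  have : ∫ x in Set.Icc (0:ℝ) (2*Real.pi), Real.cos x = 0 := by
    rw [integral_Icc_eq_integral_Ioc, ← intervalIntegral.integral_of_le h2]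
    simp
  rw [this]; simp

/-- Proposition 3: average channel gain of the semi-cooperative deployment
(SCD) scheme.  `R` models the norm of the normalized BS–UE channel
(`E[R²] = N_B`), all waveguides are phase-aligned to the common anchor `φ₁`,
which is uniform on `[0, 2π]` and independent of `R`. -/
theorem scd_average_channel_gain
    {Ω : Type*} [MeasurableSpace Ω] (μ : Measure Ω) [IsProbabilityMeasure μ]
    (η LB : ℝ) (hη : 0 < η) (hLB : 0 < LB) (α β : ℝ)
    (NB NG K : ℕ) (hNB : 0 < NB) (hNG : 0 < NG) (hK : 0 < K)
    (LG : Fin K → ℝ) (hLG : ∀ k, 0 < LG k)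
    (R : Ω → ℝ) (hRmeas : Measurable R) (hRnn : ∀ ω, 0 ≤ R ω)
    (hRL2 : MemLp R 2 μ) (hER2 : ∫ ω, R ω ^ 2 ∂μ = NB)
    (φ₁ : Ω → ℝ) (hφmeas : Measurable φ₁) (hφunif : IsUniform02pi μ φ₁)
    (hindep : IndepFun R φ₁ μ)
    (hC : Ω → ℂ)
    (hhC : ∀ ω, hC ω =
      (Real.sqrt (η * NB / ((NB + K) * LB ^ α)) * R ω : ℝ) +
      (Real.sqrt (η * K / (NB + K) * ∑ k, NG / LG k ^ β) : ℂ) *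
        Complex.exp (-Complex.I * (φ₁ ω))) :
    ∫ ω, ‖hC ω‖ ^ 2 ∂μ =
      η * NB ^ 2 / ((NB + K) * LB ^ α) +
        η * NG * K / (NB + K) * ∑ k, 1 / LG k ^ β := by
  set A : ℝ := η * NB / ((NB + K) * LB ^ α) with hAdef
  set B : ℝ := η * K / (NB + K) * ∑ k, NG / LG k ^ β with hBdef
  set a : ℝ := Real.sqrt A with hadef
  set b : ℝ := Real.sqrt B with hbdef
  have hA0 : 0 ≤ A := by
    apply div_nonneg (by positivity)
    apply mul_nonneg (by positivity) (le_of_lt (Real.rpow_pos_of_pos hLB α))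
  have hB0 : 0 ≤ B := by
    apply mul_nonneg
    · apply div_nonneg (by positivity) (by positivity)
    · apply Finset.sum_nonneg
      intro k _
      exact div_nonneg (by positivity) (le_of_lt (Real.rpow_pos_of_pos (hLG k) β))
  have ha2 : a ^ 2 = A := Real.sq_sqrt hA0
  have hb2 : b ^ 2 = B := Real.sq_sqrt hB0
  have key : ∀ ω, ‖hC ω‖ ^ 2 =
      a^2 * R ω^2 + (2*a*b) * (R ω * Real.cos (φ₁ ω)) + b^2 := by
    intro ω; rw [hhC ω]; exact pointwise_abs_sq a b (φ₁ ω) (R ω)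
  have hRint : Integrable R μ := hRL2.integrable one_le_two
  have hcosint : Integrable (fun ω => Real.cos (φ₁ ω)) μ := by
    apply Integrable.mono' (integrable_const (1:ℝ))
      (Real.measurable_cos.comp hφmeas).aestronglyMeasurable
    filter_upwards with ω
    simp [Real.abs_cos_le_one]
  have hindepC : IndepFun R (fun ω => Real.cos (φ₁ ω)) μ :=
    hindep.comp measurable_id Real.measurable_cos
  have hsqint : Integrable (fun ω => R ω ^ 2) μ := hRL2.integrable_sq
  have hprodint : Integrable (fun ω => R ω * Real.cos (φ₁ ω)) μ :=
    hindepC.integrable_mul hRint hcosint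
  have hEcos : ∫ ω, Real.cos (φ₁ ω) ∂μ = 0 :=
    integral_cos_uniform μ φ₁ hφmeas hφunif
  have hEprod : ∫ ω, R ω * Real.cos (φ₁ ω) ∂μ = 0 := by
    have h := hindepC.integral_mul_eq_mul_integral hRint.aestronglyMeasurable hcosint.aestronglyMeasurable
    rw [show (R * fun ω => Real.cos (φ₁ ω)) = fun ω => R ω * Real.cos (φ₁ ω) from rfl] at h
    rw [h, hEcos, mul_zero]
  calc ∫ ω, ‖hC ω‖ ^ 2 ∂μ
      = ∫ ω, (a^2 * R ω^2 + (2*a*b) * (R ω * Real.cos (φ₁ ω)) + b^2) ∂μ := by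
        exact integral_congr_ae (Filter.Eventually.of_forall key)
    _ = a^2 * ∫ ω, R ω^2 ∂μ + (2*a*b) * ∫ ω, R ω * Real.cos (φ₁ ω) ∂μ + b^2 := by
        have h1 : Integrable (fun ω => a^2 * R ω^2) μ := hsqint.const_mul _
        have h2 : Integrable (fun ω => (2*a*b) * (R ω * Real.cos (φ₁ ω))) μ :=
          hprodint.const_mul _
        have h12 : Integrable (fun ω => a^2 * R ω^2 +
            (2*a*b) * (R ω * Real.cos (φ₁ ω))) μ := h1.add h2
        rw [integral_add h12 (integrable_const _), integral_add h1 h2,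
          integral_const_mul, integral_const_mul, integral_const]
        simp
    _ = A * NB + B := by rw [hER2, hEprod, ha2, hb2]; ring
    _ = η * NB ^ 2 / ((NB + K) * LB ^ α) + η * NG * K / (NB + K) * ∑ k, 1 / LG k ^ β := by
        rw [hAdef, hBdef]
        have hsum : (∑ k, (NG:ℝ) / LG k ^ β) = NG * ∑ k, 1 / LG k ^ β := by
          rw [Finset.mul_sum]
          congr 1; funext k; ring
        rw [hsum]; ring
end

section
/- Let K be a positive natural number, let a_1, …, a_K > 0 be real numbers, and let φ_1, …, φ_K be mutually independent real random variables, each uniformly distributed on [0, 2π]. Define the complex random variable S = Σ_{k=1}^{K} a_k·exp(i·φ_k), and assume μ(S = 0) = 0. Then the image of arg(S) in the additive circle ℝ/2πℤ (i.e., the phase of S taken modulo 2π) is uniformly distributed on the circle; equivalently, its law equals the law of φ_1 modulo 2π. -/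
open MeasureTheory ProbabilityTheory

namespace PhaseAux

open Complex Set

local instance fact2pi : Fact (0 < 2 * Real.pi) := ⟨by positivity⟩

/-- The normalized Haar (probability) measure on the circle `ℝ/2πℤ`. -/
noncomputable def haarP : Measure (AddCircle (2 * Real.pi)) :=
  (ENNReal.ofReal (2 * Real.pi))⁻¹ • volume

lemma two_pi_ne_zero : ENNReal.ofReal (2 * Real.pi) ≠ 0 :=
  (ENNReal.ofReal_pos.mpr (by positivity)).ne'

instance : IsProbabilityMeasure haarP := by
  constructor
  rw [haarP, Measure.smul_apply, AddCircle.measure_univ, smul_eq_mul,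
    ENNReal.inv_mul_cancel two_pi_ne_zero ENNReal.ofReal_ne_top]

instance : Measure.IsAddLeftInvariant (haarP) := by
  unfold haarP; infer_instance

instance : Measure.IsAddRightInvariant (haarP) := by
  unfold haarP; infer_instance

/-- Any left-invariant probability measure on the circle equals `haarP`. -/
lemma eq_haarP_of_invariant (ν : Measure (AddCircle (2 * Real.pi)))
    [IsProbabilityMeasure ν] [Measure.IsAddLeftInvariant ν] : ν = haarP := by
  rw [Measure.addHaarMeasure_unique ν (⊤ : TopologicalSpace.PositiveCompacts _),
    Measure.addHaarMeasure_unique haarP (⊤ : TopologicalSpace.PositiveCompacts _)]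
  congr 1
  simp only [TopologicalSpace.PositiveCompacts.coe_top]
  rw [measure_univ, measure_univ]

/-- The law of a uniform variable, pushed to the circle, is `haarP`. -/
lemma map_mk_eq_haarP {Ω : Type*} [MeasurableSpace Ω] (μ : Measure Ω)
    (φ : Ω → ℝ) (hm : Measurable φ) (hu : IsUniform02pi μ φ) :
    Measure.map (fun ω => ((φ ω : ℝ) : AddCircle (2 * Real.pi))) μ = haarP := by
  have hmk : Measurable ((↑) : ℝ → AddCircle (2 * Real.pi)) :=
    AddCircle.measurable_mk'
  have : (fun ω => ((φ ω : ℝ) : AddCircle (2 * Real.pi)))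
      = ((↑) : ℝ → AddCircle (2 * Real.pi)) ∘ φ := rfl
  rw [this, ← Measure.map_map hmk hm, hu, Measure.map_smul]
  have hIcc : volume.restrict (Icc 0 (2 * Real.pi))
      = volume.restrict (Ioc 0 (2 * Real.pi)) :=
    (Measure.restrict_congr_set Ioc_ae_eq_Icc).symm
  rw [hIcc]
  have := (AddCircle.measurePreserving_mk (2 * Real.pi) 0).map_eq
  rw [zero_add] at this
  rw [this, haarP]

end PhaseAux

/-- Appendix A, steps 1–5: the phase (taken modulo 2π, i.e. in the additive
circle `ℝ/2πℤ`) of the superposition `S = Σ_k a_k e^{iφ_k}` of vectors with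
positive amplitudes and mutually independent phases, each uniform on
`[0, 2π]`, is itself uniformly distributed on the circle: its law equals the
law of `φ₁` modulo `2π`. -/
theorem phase_of_superposition_uniform
    {Ω : Type*} [MeasurableSpace Ω] (μ : Measure Ω) [IsProbabilityMeasure μ]
    (K : ℕ) (hK : 0 < K) (a : Fin K → ℝ) (ha : ∀ k, 0 < a k)
    (φ : Fin K → Ω → ℝ) (hφmeas : ∀ k, Measurable (φ k))
    (hφunif : ∀ k, IsUniform02pi μ (φ k))
    (hindep : iIndepFun φ μ)
    (S : Ω → ℂ)
    (hSdef : ∀ ω, S ω = ∑ k, (a k : ℂ) * Complex.exp (Complex.I * (φ k ω)))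
    (hS0 : μ {ω | S ω = 0} = 0) :
    Measure.map (fun ω => ((Complex.arg (S ω) : ℝ) : AddCircle (2 * Real.pi))) μ =
      Measure.map (fun ω => ((φ ⟨0, hK⟩ ω : ℝ) : AddCircle (2 * Real.pi))) μ := by
  classical
  haveI : Fact (0 < 2 * Real.pi) := ⟨by positivity⟩
  set G := AddCircle (2 * Real.pi) with hG
  -- the "complex exponential" on the circle
  set c : G → ℂ := fun θ => Real.Angle.cos θ + Real.Angle.sin θ * Complex.I with hc
  have hc_coe : ∀ x : ℝ, c (x : G) = Complex.exp (Complex.I * x) := by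
    intro x
    show (Real.Angle.cos (x : Real.Angle) : ℂ) + Real.Angle.sin (x : Real.Angle) * Complex.I = _
    rw [Real.Angle.cos_coe, Real.Angle.sin_coe, Complex.ofReal_cos, Complex.ofReal_sin,
      ← Complex.exp_mul_I, mul_comm]
  have hcos : Continuous fun θ : G => Real.Angle.cos θ := Real.Angle.continuous_cos
  have hsin : Continuous fun θ : G => Real.Angle.sin θ := Real.Angle.continuous_sin
  have hc_meas : Measurable c := by
    apply Measurable.add
    · exact (Complex.measurable_ofReal).comp hcos.measurable
    · exact ((Complex.measurable_ofReal).comp hsin.measurable).mul_const _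
  have hc_eq : ∀ θ : G, c θ = ((Real.Angle.toCircle θ : Circle) : ℂ) := by
    intro θ
    exact (Real.Angle.coe_toCircle θ).symm
  have hc_mul : ∀ (θ : G) (t : ℝ), c (θ + (t : G)) = c θ * c (t : G) := by
    intro θ t
    rw [hc_eq, hc_eq, hc_eq]
    have : Real.Angle.toCircle (θ + (t : G))
        = Real.Angle.toCircle θ * Real.Angle.toCircle ((t : ℝ) : G) :=
      Real.Angle.toCircle_add θ _
    rw [this]
    push_cast
    ring
  have hc_ne : ∀ t : ℝ, c (t : G) ≠ 0 := by
    intro t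
    rw [hc_coe]
    exact Complex.exp_ne_zero _
  have harg_c : ∀ θ : G, (Complex.arg (c θ) : Real.Angle) = θ :=
    fun θ => Complex.arg_cos_add_sin_mul_I_coe_angle θ
  -- the phase function on the torus
  set F : (Fin K → G) → G :=
    fun x => ((Complex.arg (∑ k, (a k : ℂ) * c (x k)) : ℝ) : G) with hF
  have hF_meas : Measurable F := by
    apply Measurable.comp (AddCircle.measurable_mk')
    apply Complex.measurable_arg.comp
    exact Finset.measurable_sum _ fun k _ =>
      (measurable_const.mul (hc_meas.comp (measurable_pi_apply k)))
  -- joint law of the phases on the torus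
  set ψ : Ω → (Fin K → G) := fun ω k => ((φ k ω : ℝ) : G) with hψ
  have hmk : Measurable ((↑) : ℝ → G) := AddCircle.measurable_mk'
  have hψk_meas : ∀ k, Measurable fun ω => ((φ k ω : ℝ) : G) :=
    fun k => hmk.comp (hφmeas k)
  have hψ_meas : Measurable ψ := measurable_pi_lambda _ hψk_meas
  have hψk_law : ∀ k, Measure.map (fun ω => ((φ k ω : ℝ) : G)) μ = PhaseAux.haarP :=
    fun k => PhaseAux.map_mk_eq_haarP μ (φ k) (hφmeas k) (hφunif k)
  have hindep' : iIndepFun (fun k ω => ((φ k ω : ℝ) : G)) μ :=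
    hindep.comp (fun _ => ((↑) : ℝ → G)) (fun _ => hmk)
  have hjoint : Measure.map ψ μ = Measure.pi (fun _ : Fin K => PhaseAux.haarP) := by
    refine (Measure.pi_eq fun s hs => ?_).symm
    rw [Measure.map_apply hψ_meas (MeasurableSet.univ_pi hs)]
    have hpre : ψ ⁻¹' (Set.pi Set.univ s)
        = ⋂ k ∈ (Finset.univ : Finset (Fin K)), (fun ω => ((φ k ω : ℝ) : G)) ⁻¹' s k := by
      ext ω; simp [ψ, Set.mem_pi]
    rw [hpre, hindep'.measure_inter_preimage_eq_mul _ (fun k _ => hs k)]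
    refine Finset.prod_congr rfl fun k _ => ?_
    rw [← hψk_law k, Measure.map_apply (hψk_meas k) (hs k)]
  -- arg S = F ∘ ψ
  have hFψ : ∀ ω, F (ψ ω) = ((Complex.arg (S ω) : ℝ) : G) := by
    intro ω
    have : (∑ k, (a k : ℂ) * c (ψ ω k)) = S ω := by
      rw [hSdef]
      exact Finset.sum_congr rfl fun k _ => by rw [hc_coe]
    simp only [F, this]
  -- law of arg S
  have hmap_argS :
      Measure.map (fun ω => ((Complex.arg (S ω) : ℝ) : G)) μ
        = Measure.map F (Measure.pi (fun _ : Fin K => PhaseAux.haarP)) := by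
    have hfe : (fun ω => ((Complex.arg (S ω) : ℝ) : G)) = F ∘ ψ :=
      funext fun ω => (hFψ ω).symm
    rw [hfe, ← Measure.map_map hF_meas hψ_meas, hjoint]
  set ν : Measure G := Measure.map F (Measure.pi (fun _ : Fin K => PhaseAux.haarP)) with hν
  haveI : IsProbabilityMeasure ν := Measure.isProbabilityMeasure_map hF_meas.aemeasurable
  -- the zero set is null
  set Z : Set (Fin K → G) := {x | (∑ k, (a k : ℂ) * c (x k)) = 0} with hZ
  have hZ_meas : MeasurableSet Z := by
    have : Measurable fun x : Fin K → G => ∑ k, (a k : ℂ) * c (x k) :=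
      Finset.measurable_sum _ fun k _ =>
        (measurable_const.mul (hc_meas.comp (measurable_pi_apply k)))
    exact this (measurableSet_singleton 0)
  have hZ_null : Measure.pi (fun _ : Fin K => PhaseAux.haarP) Z = 0 := by
    rw [← hjoint, Measure.map_apply hψ_meas hZ_meas]
    have : ψ ⁻¹' Z ⊆ {ω | S ω = 0} := by
      intro ω hω
      simp only [Set.mem_preimage, Z, Set.mem_setOf_eq] at hω ⊢
      rw [hSdef]
      rw [← hω]
      exact (Finset.sum_congr rfl fun k _ => by rw [hc_coe]).symm
    exact measure_mono_null this hS0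
  -- invariance of ν
  haveI : Measure.IsAddLeftInvariant ν := by
    constructor
    intro g
    obtain ⟨t, rfl⟩ : ∃ t : ℝ, (t : G) = g := Quotient.exists_rep g
    have hshift : MeasurePreserving (fun x : Fin K → G => fun k => x k + (t : G))
        (Measure.pi (fun _ : Fin K => PhaseAux.haarP))
        (Measure.pi (fun _ : Fin K => PhaseAux.haarP)) :=
      measurePreserving_pi _ _ (fun _ => measurePreserving_add_right PhaseAux.haarP _)
    have hpoint : ∀ x ∉ Z, F x + ((t : ℝ) : G) = F (fun k => x k + (t : G)) := by
      intro x hx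
      have hx0 : (∑ k, (a k : ℂ) * c (x k)) ≠ 0 := hx
      have hsum : (∑ k, (a k : ℂ) * c (x k + (t : G)))
          = (∑ k, (a k : ℂ) * c (x k)) * c ((t : ℝ) : G) := by
        rw [Finset.sum_mul]
        exact Finset.sum_congr rfl fun k _ => by rw [hc_mul]; ring
      have hFx : F (fun k => x k + (t : G))
          = ((Complex.arg ((∑ k, (a k : ℂ) * c (x k)) * c ((t : ℝ) : G)) : ℝ) : G) := by
        simp only [F, hsum]
      rw [hFx]
      have harg := Complex.arg_mul_coe_angle hx0 (hc_ne t)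
      rw [harg_c ((t : ℝ) : G)] at harg
      exact harg.symm
    have key : (fun x => F x + (t : G))
        =ᵐ[Measure.pi (fun _ : Fin K => PhaseAux.haarP)]
        (fun x => F (fun k => x k + (t : G))) := by
      filter_upwards [measure_eq_zero_iff_ae_notMem.mp hZ_null] with x hx using hpoint x hx
    calc Measure.map (fun y => (t : G) + y) ν
        = Measure.map (fun y => y + (t : G)) ν := by
          congr 1; funext y; exact add_comm _ _
      _ = Measure.map ((fun y => y + (t : G)) ∘ F)
            (Measure.pi (fun _ : Fin K => PhaseAux.haarP)) := by
          rw [hν, Measure.map_map (measurable_add_const _) hF_meas]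
      _ = Measure.map (fun x => F (fun k => x k + (t : G)))
            (Measure.pi (fun _ : Fin K => PhaseAux.haarP)) := Measure.map_congr key
      _ = Measure.map (F ∘ (fun x : Fin K → G => fun k => x k + (t : G)))
            (Measure.pi (fun _ : Fin K => PhaseAux.haarP)) := rfl
      _ = Measure.map F (Measure.pi (fun _ : Fin K => PhaseAux.haarP)) := by
          rw [← Measure.map_map hF_meas hshift.measurable, hshift.map_eq]
      _ = ν := rfl
  -- conclude
  rw [hmap_argS, PhaseAux.eq_haarP_of_invariant ν, hψk_law ⟨0, hK⟩]
end

section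
/- Let N_B, N_G, r be strictly positive real numbers and let K ≥ 1 be a real number. Define V_SD = N_B/(N_B+K) + N_G·K·r/(N_B·(N_B+K)), V_SCD = N_B/(N_B+K) + N_G·K²·r/(N_B·(N_B+K)), and V_FCD = 1 + N_G·K·r/N_B. Then V_SD ≤ V_SCD ≤ V_FCD. -/
/-- The system performance improves progressively across the SD, SCD and FCD
schemes: `V_SD ≤ V_SCD ≤ V_FCD`. -/
theorem gains_monotone_in_coordination (NB NG K r : ℝ)
    (hNB : 0 < NB) (hNG : 0 < NG) (hK : 1 ≤ K) (hr : 0 < r) :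
    NB / (NB + K) + NG * K * r / (NB * (NB + K)) ≤
      NB / (NB + K) + NG * K ^ 2 * r / (NB * (NB + K)) ∧
    NB / (NB + K) + NG * K ^ 2 * r / (NB * (NB + K)) ≤ 1 + NG * K * r / NB := by
  have hK0 : (0:ℝ) < K := lt_of_lt_of_le one_pos hK
  have hD : 0 < NB + K := by linarith
  have hND : 0 < NB * (NB + K) := by positivity
  constructor
  · apply add_le_add_right
    gcongr
    nlinarith
  · rw [div_add_div _ _ (ne_of_gt hD) (ne_of_gt hND), div_le_iff₀ (by positivity)]
    have h1 : (1 + NG * K * r / NB) = (NB + NG * K * r) / NB := by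
      field_simp
    rw [h1, div_mul_eq_mul_div, le_div_iff₀ hNB]
    ring_nf
    nlinarith [mul_pos hNG hr, mul_pos hNB hK0, mul_pos (mul_pos hNG hr) (mul_pos hNB hK0)]
end
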